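/- arXiv:1906.02029 — 7 statements merged into one kernel-verified Lean document; each statement's English description precedes it below -/
import Mathlib

section
/- Let n be a positive integer, D ≥ 1 a real number, and let P = {p prime : p ≤ D and p | n}. Then ∑_{d | n, d ≤ D} 1/d ≥ (1/2) · ∑_{d ≤ D, every prime factor of d lies in P} 1/d. -/
/-!
Write each `d ≤ D` whose prime factors all divide `n` as `d = e * k ^ 2` with `e` squarefree.
Then `e ∣ n`, `e ≤ D` and `k ≤ D`, so `1 / d = (1 / e) * (1 / k ^ 2)` is a term of the product
`(∑_{e ∣ n, e ≤ D} 1 / e) * (∑_{k ≤ D} 1 / k ^ 2)`, and the second factor is at most `2`.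
-/

open Finset

theorem Nat.exists_dvd_mul_sq_of_forall_prime_dvd {n d : ℕ} (hn : n ≠ 0) (hd : d ≠ 0)
    (h : ∀ p : ℕ, p.Prime → p ∣ d → p ∣ n) : ∃ e k : ℕ, e ∣ n ∧ 0 < k ∧ d = e * k ^ 2 := by
  obtain ⟨e, k, -, hk, rfl, he⟩ := Nat.sq_mul_squarefree_of_pos (Nat.pos_of_ne_zero hd)
  refine ⟨e, k, ?_, hk, mul_comm _ _⟩
  rw [← Nat.prod_primeFactors_of_squarefree he, Nat.prod_primeFactors_dvd_iff hn]
  intro p hp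
  have hp' := Nat.mem_primeFactors.1 hp
  exact Nat.mem_primeFactors.2 ⟨hp'.1, h p hp'.1 (hp'.2.1.trans (dvd_mul_left e _)), hn⟩

theorem sum_inv_le_sum_inv_mul_sum_inv_sq {S T U : Finset ℕ}
    (h : ∀ d ∈ S, ∃ e ∈ T, ∃ k ∈ U, d = e * k ^ 2) :
    ∑ d ∈ S, (d : ℝ)⁻¹ ≤ (∑ e ∈ T, (e : ℝ)⁻¹) * ∑ k ∈ U, ((k : ℝ) ^ 2)⁻¹ := by
  have hS : S ⊆ (T ×ˢ U).image fun x : ℕ × ℕ ↦ x.1 * x.2 ^ 2 := by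
    intro d hd
    obtain ⟨e, he, k, hk, rfl⟩ := h d hd
    exact mem_image.2 ⟨(e, k), mem_product.2 ⟨he, hk⟩, rfl⟩
  calc ∑ d ∈ S, (d : ℝ)⁻¹
      ≤ ∑ d ∈ (T ×ˢ U).image fun x : ℕ × ℕ ↦ x.1 * x.2 ^ 2, (d : ℝ)⁻¹ :=
        sum_le_sum_of_subset_of_nonneg hS fun _ _ _ ↦ by positivity
    _ ≤ ∑ x ∈ T ×ˢ U, ((x.1 * x.2 ^ 2 : ℕ) : ℝ)⁻¹ :=
        sum_image_le_of_nonneg fun _ _ ↦ by positivity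
    _ = (∑ e ∈ T, (e : ℝ)⁻¹) * ∑ k ∈ U, ((k : ℝ) ^ 2)⁻¹ := by
        rw [sum_product, sum_mul_sum]
        push_cast
        simp_rw [mul_inv]

open scoped Classical in
theorem stmt5_general (n : ℕ) (hn : 0 < n) (D : ℝ) :
    (1 / 2 : ℝ) *
        ∑ d ∈ (Finset.Icc 1 ⌊D⌋₊).filter
          (fun d : ℕ => ∀ p : ℕ, p.Prime → p ∣ d → ((p : ℝ) ≤ D ∧ p ∣ n)),
          (1 : ℝ) / d ≤
      ∑ d ∈ n.divisors.filter (fun d : ℕ => (d : ℝ) ≤ D), (1 : ℝ) / d := by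
  set S := (Icc 1 ⌊D⌋₊).filter
    (fun d : ℕ => ∀ p : ℕ, p.Prime → p ∣ d → ((p : ℝ) ≤ D ∧ p ∣ n))
  set T := n.divisors.filter (fun d : ℕ => (d : ℝ) ≤ D)
  have hdecomp : ∀ d ∈ S, ∃ e ∈ T, ∃ k ∈ Ioo 0 (⌊D⌋₊ + 1), d = e * k ^ 2 := by
    intro d hd
    obtain ⟨⟨hd1, hdD⟩, hP⟩ := by simpa only [S, mem_filter, mem_Icc] using hd
    obtain ⟨e, k, hen, hk, rfl⟩ := Nat.exists_dvd_mul_sq_of_forall_prime_dvd hn.ne'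
      (by omega) fun p hp hpd ↦ (hP p hp hpd).2
    have he0 : 0 < e := Nat.pos_of_mul_pos_right hd1
    have he : e ≤ e * k ^ 2 := Nat.le_mul_of_pos_right e (by positivity)
    have hk' : k ≤ e * k ^ 2 :=
      (Nat.le_self_pow two_ne_zero k).trans (Nat.le_mul_of_pos_left _ he0)
    refine ⟨e, mem_filter.2 ⟨Nat.mem_divisors.2 ⟨hen, hn.ne'⟩, ?_⟩, k,
      mem_Ioo.2 ⟨hk, Nat.lt_succ_of_le (hk'.trans hdD)⟩, rfl⟩
    exact (Nat.cast_le.2 he).trans ((Nat.le_floor_iff' (by omega)).1 hdD)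
  have hsq : ∑ k ∈ Ioo 0 (⌊D⌋₊ + 1), ((k : ℝ) ^ 2)⁻¹ ≤ 2 := by
    simpa using sum_Ioo_inv_sq_le (α := ℝ) 0 (⌊D⌋₊ + 1)
  simp only [one_div]
  calc 2⁻¹ * ∑ d ∈ S, (d : ℝ)⁻¹
      ≤ 2⁻¹ * ((∑ e ∈ T, (e : ℝ)⁻¹) * ∑ k ∈ Ioo 0 (⌊D⌋₊ + 1), ((k : ℝ) ^ 2)⁻¹) := by
        gcongr
        exact sum_inv_le_sum_inv_mul_sum_inv_sq hdecomp
    _ ≤ 2⁻¹ * ((∑ e ∈ T, (e : ℝ)⁻¹) * 2) := by gcongr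
    _ = ∑ e ∈ T, (e : ℝ)⁻¹ := by ring

open scoped Classical in
theorem stmt5 (n : ℕ) (hn : 0 < n) (D : ℝ) (hD : 1 ≤ D) :
    (1 / 2 : ℝ) *
        ∑ d ∈ (Finset.Icc 1 ⌊D⌋₊).filter
          (fun d : ℕ => ∀ p : ℕ, p.Prime → p ∣ d → ((p : ℝ) ≤ D ∧ p ∣ n)),
          (1 : ℝ) / d ≤
      ∑ d ∈ n.divisors.filter (fun d : ℕ => (d : ℝ) ≤ D), (1 : ℝ) / d :=
  stmt5_general n hn D
end

section
/- The product over all primes p of (1 + 1/(p(p−1))) converges and equals ζ(2)ζ(3)/ζ(6); moreover this value is strictly less than 2. -/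
/-!
From `1 - x⁶ = (1 - x³)(1 + x³)` and `1 + x³ = (1 + x)(1 - x + x²)` one gets, at `x = 1/p`,
`(1 - p⁻²)⁻¹ (1 - p⁻³)⁻¹ = (1 - p⁻⁶)⁻¹ (1 + 1/(p(p-1)))`, so the value follows from the Euler
products of `ζ` at `2`, `3` and `6`; the product converges because `∑ 1/(p(p-1))` does.
For the bound, the factors at the primes up to `31` are multiplied out exactly, and all the
factors at `n > 31` together contribute at most `31/30`, because
`(1 + 1/(n(n-1))) · n/(n-1) ≤ (n-1)/(n-2)` makes the product telescope.
-/

open Finset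

-- `localFactor 0 = localFactor 1 = 1`, since `1 / 0 = 0`.
noncomputable def localFactor (n : ℕ) : ℝ := 1 + 1 / ((n : ℝ) * ((n : ℝ) - 1))

lemma one_div_mul_sub_one_nonneg (n : ℕ) : 0 ≤ 1 / ((n : ℝ) * ((n : ℝ) - 1)) := by
  rcases Nat.eq_zero_or_pos n with rfl | hn
  · simp
  · have : (1 : ℝ) ≤ n := by exact_mod_cast hn
    have : 0 ≤ (n : ℝ) - 1 := by linarith
    positivity

lemma one_le_localFactor (n : ℕ) : 1 ≤ localFactor n :=
  le_add_of_nonneg_right (one_div_mul_sub_one_nonneg n)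

lemma localFactor_nonneg (n : ℕ) : 0 ≤ localFactor n :=
  zero_le_one.trans (one_le_localFactor n)

lemma one_div_mul_sub_one_le (n : ℕ) : 1 / ((n : ℝ) * ((n : ℝ) - 1)) ≤ 2 / (n : ℝ) ^ 2 := by
  rcases lt_or_ge n 2 with hn | hn
  · interval_cases n <;> norm_num
  · have hn : (2 : ℝ) ≤ n := by exact_mod_cast hn
    rw [div_le_div_iff₀ (by nlinarith) (by positivity)]
    nlinarith

lemma summable_one_div_mul_sub_one : Summable fun n : ℕ => 1 / ((n : ℝ) * ((n : ℝ) - 1)) :=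
  ((Real.summable_one_div_nat_pow.mpr one_lt_two).mul_left 2).of_nonneg_of_le
    one_div_mul_sub_one_nonneg fun n => (one_div_mul_sub_one_le n).trans_eq (mul_one_div 2 _).symm

lemma multipliable_localFactor_primes : Multipliable fun p : Nat.Primes => localFactor p :=
  Real.multipliable_one_add_of_summable (summable_one_div_mul_sub_one.subtype _)

lemma inv_one_sub_inv_sq_mul_inv_one_sub_inv_cube {K : Type*} [Field K] {x : K} (hx0 : x ≠ 0)
    (hx : x ^ 6 ≠ 1) :
    (1 - (x ^ 2)⁻¹)⁻¹ * (1 - (x ^ 3)⁻¹)⁻¹ = (1 - (x ^ 6)⁻¹)⁻¹ * (1 + 1 / (x * (x - 1))) := by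
  have h1 : x - 1 ≠ 0 := fun h => hx (by rw [sub_eq_zero.mp h, one_pow])
  have h2 : x ^ 2 - 1 ≠ 0 := fun h =>
    hx (by rw [show x ^ 6 = (x ^ 2) ^ 3 by ring, sub_eq_zero.mp h, one_pow])
  have h3 : x ^ 3 - 1 ≠ 0 := fun h =>
    hx (by rw [show x ^ 6 = (x ^ 3) ^ 2 by ring, sub_eq_zero.mp h, one_pow])
  have h6 : x ^ 6 - 1 ≠ 0 := sub_ne_zero.mpr hx
  field_simp
  ring

lemma eulerFactor_two_mul_eulerFactor_three (p : Nat.Primes) :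
    (1 - (p : ℂ) ^ (-2 : ℂ))⁻¹ * (1 - (p : ℂ) ^ (-3 : ℂ))⁻¹ =
      (1 - (p : ℂ) ^ (-6 : ℂ))⁻¹ * (localFactor p : ℂ) := by
  have hp : (1 : ℕ) < p := p.prop.one_lt
  have hp6 : ((p : ℕ) : ℂ) ^ 6 ≠ 1 := by
    exact_mod_cast (Nat.one_lt_pow (by norm_num) hp).ne'
  simp only [Complex.cpow_neg, Complex.cpow_ofNat, localFactor]
  push_cast
  exact inv_one_sub_inv_sq_mul_inv_one_sub_inv_cube (by exact_mod_cast p.prop.ne_zero) hp6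

lemma ofReal_tprod_localFactor_primes :
    ((∏' p : Nat.Primes, localFactor p : ℝ) : ℂ) =
      riemannZeta 2 * riemannZeta 3 / riemannZeta 6 := by
  have hζ (s : ℂ) (hs : 1 < s.re) := riemannZeta_eulerProduct_hasProd hs
  have h23 := (hζ 2 (by norm_num)).mul (hζ 3 (by norm_num))
  simp only [eulerFactor_two_mul_eulerFactor_three] at h23
  have h6 := (hζ 6 (by norm_num)).mul
    (multipliable_localFactor_primes.hasProd.map Complex.ofRealHom Complex.continuous_ofReal)
  rw [h23.unique h6, mul_div_cancel_left₀ _ (riemannZeta_ne_zero_of_one_lt_re (by norm_num))]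
  rfl

lemma localFactor_succ_mul_le {m : ℕ} (hm : 2 ≤ m) :
    localFactor (m + 1) * ((m + 1 : ℝ) / m) ≤ m / (m - 1) := by
  have hm₂ : (2 : ℝ) ≤ m := by exact_mod_cast hm
  have h1 : (0 : ℝ) < m - 1 := by linarith
  unfold localFactor
  push_cast
  rw [add_sub_cancel_right, le_div_iff₀ h1]
  field_simp
  -- `(m² + m + 1)(m - 1) = m³ - 1 ≤ m³`
  nlinarith

lemma prod_Ioc_localFactor_mul_le {N M : ℕ} (hN : 2 ≤ N) (hNM : N ≤ M) :
    (∏ n ∈ Ioc N M, localFactor n) * (M / (M - 1) : ℝ) ≤ N / (N - 1) := by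
  induction M, hNM using Nat.le_induction with
  | base => simp
  | succ M hNM ih =>
    rw [prod_Ioc_succ_top (by omega), mul_assoc]
    push_cast
    calc (∏ n ∈ Ioc N M, localFactor n) * (localFactor (M + 1) * ((M + 1 : ℝ) / (M + 1 - 1)))
        ≤ (∏ n ∈ Ioc N M, localFactor n) * (M / (M - 1)) := by
          rw [add_sub_cancel_right]
          gcongr
          · exact prod_nonneg fun n _ => localFactor_nonneg n
          · exact localFactor_succ_mul_le (hN.trans hNM)
      _ ≤ N / (N - 1) := ih

lemma prod_localFactor_le_of_lt {N : ℕ} (hN : 2 ≤ N) {s : Finset ℕ} (hs : ∀ n ∈ s, N < n) :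
    ∏ n ∈ s, localFactor n ≤ N / (N - 1) := by
  set M := max N (s.sup id)
  have hM : (2 : ℝ) ≤ M := by exact_mod_cast hN.trans (le_max_left _ _)
  have hsM : s ⊆ Ioc N M := fun n hn =>
    mem_Ioc.mpr ⟨hs n hn, le_max_of_le_right (le_sup (f := id) hn)⟩
  calc ∏ n ∈ s, localFactor n
      ≤ ∏ n ∈ Ioc N M, localFactor n :=
        prod_le_prod_of_subset_of_one_le hsM (fun n _ => localFactor_nonneg n)
          fun n _ _ => one_le_localFactor n
    _ ≤ (∏ n ∈ Ioc N M, localFactor n) * (M / (M - 1) : ℝ) := by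
        refine le_mul_of_one_le_right (prod_nonneg fun n _ => localFactor_nonneg n) ?_
        rw [one_le_div (by linarith)]
        linarith
    _ ≤ N / (N - 1) := prod_Ioc_localFactor_mul_le hN (le_max_left _ _)

lemma prod_localFactor_primes_le {N : ℕ} (hN : 2 ≤ N) (s : Finset Nat.Primes) :
    ∏ p ∈ s, localFactor p ≤ (∏ p ∈ Nat.primesBelow (N + 1), localFactor p) * (N / (N - 1)) := by
  classical
  have himage : ∏ p ∈ s, localFactor p = ∏ n ∈ s.image (↑), localFactor n :=
    (prod_image Nat.Primes.coe_nat_injective.injOn).symm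
  rw [himage, ← prod_filter_mul_prod_filter_not _ (· ≤ N)]
  have hsmall : {n ∈ s.image ((↑) : Nat.Primes → ℕ) | n ≤ N} ⊆ Nat.primesBelow (N + 1) := by
    intro n hn
    obtain ⟨hn, hnN⟩ := mem_filter.mp hn
    obtain ⟨p, -, rfl⟩ := mem_image.mp hn
    exact Nat.mem_primesBelow.mpr ⟨Nat.lt_succ_of_le hnN, p.prop⟩
  exact mul_le_mul
    (prod_le_prod_of_subset_of_one_le hsmall (fun n _ => localFactor_nonneg n)
      fun n _ _ => one_le_localFactor n)
    (prod_localFactor_le_of_lt hN fun n hn => not_le.mp (mem_filter.mp hn).2)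
    (prod_nonneg fun n _ => localFactor_nonneg n) (prod_nonneg fun n _ => localFactor_nonneg n)

lemma prod_localFactor_primesBelow_lt_two :
    (∏ p ∈ Nat.primesBelow 32, localFactor p) * (31 / (31 - 1)) < 2 := by
  rw [show Nat.primesBelow 32 = {2, 3, 5, 7, 11, 13, 17, 19, 23, 29, 31} by decide]
  norm_num [localFactor]

lemma tprod_localFactor_primes_lt_two : ∏' p : Nat.Primes, localFactor p < 2 := by
  refine (multipliable_localFactor_primes.tprod_le_of_prod_le fun s => ?_).trans_lt
    prod_localFactor_primesBelow_lt_two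
  exact_mod_cast prod_localFactor_primes_le (N := 31) (by norm_num) s

theorem stmt6 :
    Multipliable (fun p : Nat.Primes => (1 + 1 / ((p : ℝ) * ((p : ℝ) - 1)))) ∧
    ((∏' p : Nat.Primes, (1 + 1 / ((p : ℝ) * ((p : ℝ) - 1))) : ℝ) : ℂ) =
      riemannZeta 2 * riemannZeta 3 / riemannZeta 6 ∧
    (∏' p : Nat.Primes, (1 + 1 / ((p : ℝ) * ((p : ℝ) - 1)))) < 2 :=
  ⟨multipliable_localFactor_primes, ofReal_tprod_localFactor_primes,
    tprod_localFactor_primes_lt_two⟩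
end

section
/- Let D ≥ 1 be a real number, let P be a set of primes all of which are ≤ D, and let E be the set of primes p ≤ D with p ∉ P. Then ∑_{d ≤ D, every prime factor of d lies in P} 1/d ≥ (∏_{p ∈ E} (1 − 1/p)) · log D. -/
/-!
The harmonic sum over `A = {1, …, ⌊D⌋}` is at least `log D`. Since `A` is closed under taking
divisors, `d ↦ d / p` maps the multiples of `p` in `A` injectively into `A`, so their reciprocals
sum to at most `1/p` times the whole sum: removing them keeps a proportion `≥ 1 - 1/p`. Sieving out
every prime of `E` in turn keeps `≥ ∏_{p ∈ E} (1 - 1/p)` of the harmonic sum, and every survivor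
has all its prime factors in `P`, as they are at most `D`.
-/

open Finset

def IsDivisorClosed (A : Finset ℕ) : Prop :=
  ∀ d ∈ A, ∀ e, e ∣ d → e ∈ A

lemma isDivisorClosed_Icc_one (N : ℕ) : IsDivisorClosed (Icc 1 N) := by
  intro d hd e hed
  obtain ⟨hd1, hdN⟩ := mem_Icc.mp hd
  exact mem_Icc.mpr ⟨Nat.pos_of_dvd_of_pos hed hd1, (Nat.le_of_dvd hd1 hed).trans hdN⟩

lemma IsDivisorClosed.filter_not_dvd {A : Finset ℕ} (hA : IsDivisorClosed A) (p : ℕ) :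
    IsDivisorClosed (A.filter (¬ p ∣ ·)) := by
  intro d hd e hed
  obtain ⟨hdA, hpd⟩ := mem_filter.mp hd
  exact mem_filter.mpr ⟨hA d hdA e hed, fun hpe => hpd (hpe.trans hed)⟩

lemma one_div_natCast_of_dvd {p d : ℕ} (h : p ∣ d) :
    (1 : ℝ) / d = 1 / p * (1 / ((d / p : ℕ) : ℝ)) := by
  obtain ⟨k, rfl⟩ := h
  rcases p.eq_zero_or_pos with rfl | hp
  · simp
  · rw [Nat.mul_div_cancel_left k hp, Nat.cast_mul, one_div_mul_one_div]

lemma sum_filter_dvd_one_div_le {A : Finset ℕ} (hA : IsDivisorClosed A) (p : ℕ) :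
    ∑ d ∈ A with p ∣ d, (1 : ℝ) / d ≤ 1 / p * ∑ d ∈ A, (1 : ℝ) / d := by
  have hinj : Set.InjOn (· / p) (A.filter (p ∣ ·)) := fun a ha b hb hab => by
    rw [← Nat.div_mul_cancel (mem_filter.mp ha).2, ← Nat.div_mul_cancel (mem_filter.mp hb).2]
    exact congrArg (· * p) hab
  have himage : (A.filter (p ∣ ·)).image (· / p) ⊆ A := by
    simp only [image_subset_iff, mem_filter, and_imp]
    exact fun d hd hpd => hA d hd _ (Nat.div_dvd_of_dvd hpd)
  calc ∑ d ∈ A with p ∣ d, (1 : ℝ) / d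
      = ∑ d ∈ A with p ∣ d, 1 / p * (1 / ((d / p : ℕ) : ℝ)) :=
        sum_congr rfl fun d hd => one_div_natCast_of_dvd (mem_filter.mp hd).2
    _ = ∑ e ∈ (A.filter (p ∣ ·)).image (· / p), 1 / p * (1 / (e : ℝ)) :=
        (sum_image (f := fun e : ℕ => 1 / (p : ℝ) * (1 / (e : ℝ))) hinj).symm
    _ ≤ ∑ e ∈ A, 1 / p * (1 / (e : ℝ)) :=
        sum_le_sum_of_subset_of_nonneg himage fun _ _ _ => by positivity
    _ = 1 / p * ∑ d ∈ A, (1 : ℝ) / d := (mul_sum _ _ _).symm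

lemma one_sub_one_div_mul_sum_le_sum_filter_not_dvd {A : Finset ℕ} (hA : IsDivisorClosed A)
    (p : ℕ) :
    (1 - 1 / (p : ℝ)) * ∑ d ∈ A, (1 : ℝ) / d ≤ ∑ d ∈ A with ¬ p ∣ d, (1 : ℝ) / d := by
  have hsplit := sum_filter_add_sum_filter_not A (p ∣ ·) fun d => (1 : ℝ) / d
  linarith [sum_filter_dvd_one_div_le hA p]

lemma one_sub_one_div_natCast_nonneg (p : ℕ) : 0 ≤ 1 - 1 / (p : ℝ) := by
  rcases p.eq_zero_or_pos with rfl | hp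
  · simp
  · have : 1 / (p : ℝ) ≤ 1 := div_le_one_of_le₀ (by exact_mod_cast hp) (Nat.cast_nonneg p)
    linarith

lemma prod_one_sub_one_div_mul_sum_le_sum_filter {A : Finset ℕ} (hA : IsDivisorClosed A)
    (E : Finset ℕ) :
    (∏ p ∈ E, (1 - 1 / (p : ℝ))) * ∑ d ∈ A, (1 : ℝ) / d ≤
      ∑ d ∈ A with ∀ p ∈ E, ¬ p ∣ d, (1 : ℝ) / d := by
  induction E using Finset.induction generalizing A with
  | empty => simp
  | @insert q E hq ih =>
    have hsieve : (A.filter (¬ q ∣ ·)).filter (fun d => ∀ p ∈ E, ¬ p ∣ d) =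
        A.filter (fun d => ∀ p ∈ insert q E, ¬ p ∣ d) := by
      rw [filter_filter]
      simp only [forall_mem_insert]
    calc (∏ p ∈ insert q E, (1 - 1 / (p : ℝ))) * ∑ d ∈ A, (1 : ℝ) / d
        = (∏ p ∈ E, (1 - 1 / (p : ℝ))) * ((1 - 1 / (q : ℝ)) * ∑ d ∈ A, (1 : ℝ) / d) := by
          rw [prod_insert hq]; ring
      _ ≤ (∏ p ∈ E, (1 - 1 / (p : ℝ))) * ∑ d ∈ A with ¬ q ∣ d, (1 : ℝ) / d :=
          mul_le_mul_of_nonneg_left (one_sub_one_div_mul_sum_le_sum_filter_not_dvd hA q)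
            (prod_nonneg fun p _ => one_sub_one_div_natCast_nonneg p)
      _ ≤ _ := hsieve ▸ ih (hA.filter_not_dvd q)

lemma log_le_sum_Icc_one_div (D : ℝ) (hD : 0 ≤ D) :
    Real.log D ≤ ∑ d ∈ Icc 1 ⌊D⌋₊, (1 : ℝ) / d := by
  have h := log_le_harmonic_floor D hD
  rw [harmonic_eq_sum_Icc] at h
  push_cast at h
  simpa only [one_div] using h

open scoped Classical in
lemma filter_forall_not_dvd_subset_filter_prime_dvd_mem {N : ℕ} {P : Set ℕ} {E : Finset ℕ}
    (hE : ∀ p, p.Prime → p ≤ N → p ∉ P → p ∈ E) :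
    (Icc 1 N).filter (fun d => ∀ p ∈ E, ¬ p ∣ d) ⊆
      (Icc 1 N).filter (fun d => ∀ p : ℕ, p.Prime → p ∣ d → p ∈ P) := by
  intro d hd
  simp only [mem_filter, mem_Icc] at hd ⊢
  obtain ⟨⟨hd1, hdN⟩, hsifted⟩ := hd
  refine ⟨⟨hd1, hdN⟩, fun p hp hpd => ?_⟩
  by_contra hpP
  exact hsifted p (hE p hp ((Nat.le_of_dvd hd1 hpd).trans hdN) hpP) hpd

open scoped Classical in
theorem stmt7_general (D : ℝ) (hD : 1 ≤ D) (P : Set ℕ) :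
    (∏ p ∈ (Finset.Icc 1 ⌊D⌋₊).filter (fun p : ℕ => Nat.Prime p ∧ p ∉ P),
        (1 - 1 / (p : ℝ))) * Real.log D ≤
      ∑ d ∈ (Finset.Icc 1 ⌊D⌋₊).filter
        (fun d : ℕ => ∀ p : ℕ, p.Prime → p ∣ d → p ∈ P), (1 : ℝ) / d := by
  calc _ ≤ _ * ∑ d ∈ Icc 1 ⌊D⌋₊, (1 : ℝ) / d :=
        mul_le_mul_of_nonneg_left (log_le_sum_Icc_one_div D (by linarith))
          (prod_nonneg fun p _ => one_sub_one_div_natCast_nonneg p)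
    _ ≤ _ := prod_one_sub_one_div_mul_sum_le_sum_filter (isDivisorClosed_Icc_one _) _
    _ ≤ _ :=
        sum_le_sum_of_subset_of_nonneg
          (filter_forall_not_dvd_subset_filter_prime_dvd_mem fun p hp hpN hpP =>
            mem_filter.mpr ⟨mem_Icc.mpr ⟨hp.one_lt.le, hpN⟩, hp, hpP⟩)
          fun _ _ _ => by positivity

open scoped Classical in
theorem stmt7 (D : ℝ) (hD : 1 ≤ D) (P : Set ℕ)
    (hP : ∀ p ∈ P, Nat.Prime p ∧ (p : ℝ) ≤ D) :
    (∏ p ∈ (Finset.Icc 1 ⌊D⌋₊).filter (fun p : ℕ => Nat.Prime p ∧ p ∉ P),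
        (1 - 1 / (p : ℝ))) * Real.log D ≤
      ∑ d ∈ (Finset.Icc 1 ⌊D⌋₊).filter
        (fun d : ℕ => ∀ p : ℕ, p.Prime → p ∣ d → p ∈ P), (1 : ℝ) / d :=
  stmt7_general D hD P
end

section
/- Fix ε > 0. For every integer n ≥ 2, the sum of all positive integers m < n satisfying gcd(m,n) ≥ n/(log n)^{ε/4} is at most n (log n)^{ε/2}. -/
/-!
Write `d = gcd(m, n)` and `L = (log n)^(ε/4)`. The condition `gcd(m, n) ≥ n / L` says `n / d ≤ L`,
and then `m / d < n / d ≤ L` as well. Since `m` is recovered from the pair `(n / d, m / d)`, at most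
`⌊L⌋²` integers `m < n` qualify, and each is less than `n`; hence the sum is at most
`L² n = n (log n)^(ε/2)`.
-/

open Finset

namespace Nat

theorem gcd_eq_of_div_gcd_eq {a b n : ℕ} (hn : n ≠ 0) (h : n / a.gcd n = n / b.gcd n) :
    a.gcd n = b.gcd n := by
  rw [← Nat.div_div_self (Nat.gcd_dvd_right a n) hn, h,
    Nat.div_div_self (Nat.gcd_dvd_right b n) hn]

theorem eq_of_div_gcd_eq {a b n : ℕ} (hn : n ≠ 0) (hn' : n / a.gcd n = n / b.gcd n)
    (h : a / a.gcd n = b / b.gcd n) : a = b := by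
  rw [← Nat.div_mul_cancel (Nat.gcd_dvd_left a n), ← Nat.div_mul_cancel (Nat.gcd_dvd_left b n), h,
    gcd_eq_of_div_gcd_eq hn hn']

theorem card_filter_div_gcd_le (n N : ℕ) :
    #{m ∈ Ico 1 n | n / m.gcd n ≤ N} ≤ N ^ 2 := by
  have hcard : #(Icc 1 N ×ˢ Icc 1 N) = N ^ 2 := by simp [sq]
  refine hcard ▸ card_le_card_of_injOn (fun m ↦ (n / m.gcd n, m / m.gcd n)) ?_ ?_
  · intro m hm
    simp only [coe_filter, mem_Ico, Set.mem_ofPred_eq] at hm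
    obtain ⟨⟨hm1, hmn⟩, hN⟩ := hm
    have hd : 0 < m.gcd n := Nat.gcd_pos_of_pos_left n hm1
    have hmd : m / m.gcd n < n / m.gcd n := Nat.div_lt_div_of_lt_of_dvd (Nat.gcd_dvd_right m n) hmn
    have hmd_pos : 0 < m / m.gcd n := Nat.div_pos (Nat.gcd_le_left n hm1) hd
    simp only [coe_product, coe_Icc, Set.mem_prod, Set.mem_Icc]
    omega
  · intro a ha b _ hab
    simp only [coe_filter, mem_Ico, Set.mem_ofPred_eq] at ha
    obtain ⟨hn', h⟩ := Prod.mk.inj hab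
    exact eq_of_div_gcd_eq (by omega) hn' h

theorem sum_filter_div_gcd_le (n N : ℕ) :
    ∑ m ∈ Ico 1 n with n / m.gcd n ≤ N, m ≤ N ^ 2 * n :=
  calc ∑ m ∈ Ico 1 n with n / m.gcd n ≤ N, m
      ≤ #{m ∈ Ico 1 n | n / m.gcd n ≤ N} • n :=
        sum_le_card_nsmul _ _ _ fun m hm ↦ by simp only [mem_filter, mem_Ico] at hm; omega
    _ ≤ N ^ 2 * n := by rw [smul_eq_mul]; gcongr; exact card_filter_div_gcd_le n N

theorem div_gcd_le_floor {m n : ℕ} {L : ℝ} (hL : 0 < L) (h : (n : ℝ) / L ≤ m.gcd n) :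
    n / m.gcd n ≤ ⌊L⌋₊ := by
  refine Nat.le_floor (Nat.cast_div_le.trans (div_le_of_le_mul₀ (by positivity) hL.le ?_))
  rw [div_le_iff₀ hL] at h
  linarith

end Nat

theorem stmt12_general (ε : ℝ) (n : ℕ) (hn : 2 ≤ n) :
    ∑ m ∈ (Finset.Ico 1 n).filter
        (fun m : ℕ => (n : ℝ) / (Real.log n) ^ (ε / 4) ≤ (Nat.gcd m n : ℝ)),
      (m : ℝ) ≤ (n : ℝ) * (Real.log n) ^ (ε / 2) := by
  have hlog : 0 < Real.log n := Real.log_pos (by exact_mod_cast hn)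
  set L := Real.log n ^ (ε / 4)
  have hL : 0 < L := Real.rpow_pos_of_pos hlog _
  have hLL : L ^ 2 = Real.log n ^ (ε / 2) := by
    rw [← Real.rpow_natCast, ← Real.rpow_mul hlog.le]
    ring_nf
  have hsub : {m ∈ Ico 1 n | (n : ℝ) / L ≤ m.gcd n} ⊆ {m ∈ Ico 1 n | n / m.gcd n ≤ ⌊L⌋₊} :=
    monotone_filter_right _ fun _ _ ↦ Nat.div_gcd_le_floor hL
  calc ∑ m ∈ Ico 1 n with (n : ℝ) / L ≤ m.gcd n, (m : ℝ)
      ≤ ∑ m ∈ Ico 1 n with n / m.gcd n ≤ ⌊L⌋₊, (m : ℝ) :=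
        sum_le_sum_of_subset_of_nonneg hsub fun _ _ _ ↦ by positivity
    _ ≤ (⌊L⌋₊ : ℝ) ^ 2 * n := by
        rw [← Nat.cast_sum]; exact_mod_cast Nat.sum_filter_div_gcd_le n ⌊L⌋₊
    _ ≤ L ^ 2 * n := by gcongr; exact Nat.floor_le hL.le
    _ = n * Real.log n ^ (ε / 2) := by rw [hLL, mul_comm]

theorem stmt12 (ε : ℝ) (hε : 0 < ε) (n : ℕ) (hn : 2 ≤ n) :
    ∑ m ∈ (Finset.Ico 1 n).filter
        (fun m : ℕ => (n : ℝ) / (Real.log n) ^ (ε / 4) ≤ (Nat.gcd m n : ℝ)),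
      (m : ℝ) ≤ (n : ℝ) * (Real.log n) ^ (ε / 2) :=
  stmt12_general ε n hn
end

section
/- Fix ε > 0 and for each n ≥ 2 set E*_n = E_n^{(log n)^{ε/4}}. Then for every integer N ≥ 2, ∑_{1 ≤ m, n ≤ N, m ≠ n} λ(E*_m ∩ E*_n) ≤ 8 (∑_{n=1}^N ψ(n))² + 4 ∑_{n=2}^N ψ(n) (log n)^{ε/2}. -/
open MeasureTheory

/-- `E ψ n D ⊆ ℝ/ℤ` is the union over `a ∈ {1, …, n}` with `gcd(a, n) ≤ D` of the
open intervals `((a - ψ n)/n, (a + ψ n)/n)` modulo `1`. -/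
noncomputable def E (ψ : ℕ → ℝ) (n : ℕ) (D : ℝ) : Set UnitAddCircle :=
  ⋃ a ∈ {a : ℕ | 1 ≤ a ∧ a ≤ n ∧ (Nat.gcd a n : ℝ) ≤ D},
    (fun x : ℝ => (x : UnitAddCircle)) ''
      Set.Ioo (((a : ℝ) - ψ n) / n) (((a : ℝ) + ψ n) / n)

/-- `Estar ψ ε n` is `E ψ n D` with `D = (log n)^(ε/4)` for `n ≥ 2`,
and with `D = 1` for `n ≤ 1`. -/
noncomputable def Estar (ψ : ℕ → ℝ) (ε : ℝ) (n : ℕ) : Set UnitAddCircle :=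
  if n ≤ 1 then E ψ n 1 else E ψ n ((Real.log n) ^ (ε / 4))

open Metric Finset

/-!
`E ψ m D` lies in the union of the balls of radius `ψ m / m` about the admissible centres `a / m`.
Two such balls on the circle meet in measure at most `min (2ψ(m)/m) (2ψ(n)/n)`, and only when
`|a n - b m - k m n| < ψ(m) n + ψ(n) m` for some integer `k`. These integers are multiples of
`g = gcd(m, n)` and each value is taken by at most `g` pairs `(a, b)`, so the nonzero values account
for at most `2 (ψ(m) n + ψ(n) m)` pairs, that is for measure `8 ψ(m) ψ(n)`. The value `0` means
`a/m = b/n`, which forces `m/g ≤ D_m` and `n/g ≤ D_n`; the at most `g` coinciding centres cost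
`g min (2ψ(m)/m) (2ψ(n)/n) ≤ ψ(m) D_m / (n/g)² + ψ(n) D_n / (m/g)²` by AM-GM. For fixed `m`,
`n ↦ (gcd(m, n), n / gcd(m, n))` is injective, at most `D_m` divisors are admissible and
`∑ ν⁻² ≤ 2`, so the weights charged to `m` sum to at most `2 ψ(m) D_m² = 2 ψ(m) (log m)^(ε/2)`.
-/

theorem UnitAddCircle.dist_coe_coe (x y : ℝ) :
    dist (x : UnitAddCircle) (y : UnitAddCircle) = |x - y - round (x - y)| := by
  rw [dist_eq_norm, ← AddCircle.coe_sub, UnitAddCircle.norm_eq]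

theorem UnitAddCircle.dist_coe_coe_le (x y : ℝ) :
    dist (x : UnitAddCircle) (y : UnitAddCircle) ≤ |x - y| := by
  simpa [dist_coe_coe] using round_le (x - y) 0

theorem UnitAddCircle.coe_image_ball_subset (x r : ℝ) :
    (fun t : ℝ => (t : UnitAddCircle)) '' ball x r ⊆ ball (x : UnitAddCircle) r := by
  rintro _ ⟨t, ht, rfl⟩
  exact mem_ball.2 ((dist_coe_coe_le t x).trans_lt ht)

theorem AddCircle.volume_ball_inter_ball_le {T : ℝ} [Fact (0 < T)] (x y : AddCircle T)
    (r s : ℝ) : volume (ball x r ∩ ball y s) ≤ ENNReal.ofReal (min (2 * r) (2 * s)) := by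
  have hball : ∀ (z : AddCircle T) t, volume (ball z t) ≤ ENNReal.ofReal (2 * t) := fun z t =>
    (measure_mono ball_subset_closedBall).trans <| (AddCircle.volume_closedBall T t).trans_le <|
      ENNReal.ofReal_le_ofReal (min_le_right _ _)
  rw [ENNReal.ofReal_min]
  exact le_min ((measure_mono Set.inter_subset_left).trans (hball x r))
    ((measure_mono Set.inter_subset_right).trans (hball y s))

theorem modEq_div_gcd_of_modEq {m n a b a' b' : ℕ} (hm : 0 < m)
    (h : (a * n - b * m : ℤ) ≡ a' * n - b' * m [ZMOD m * n]) : a ≡ a' [MOD m / m.gcd n] := by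
  refine Nat.ModEq.cancel_right_div_gcd hm (Nat.modEq_iff_dvd.2 ?_)
  push_cast
  rw [show (a' : ℤ) * n - a * n = (a' * n - b' * m) - (a * n - b * m) + m * (b' - b) by ring]
  exact dvd_add ((dvd_mul_right (m : ℤ) n).trans h.dvd) (dvd_mul_right _ _)

theorem eq_of_modEq_of_mem_Icc {m n a b b' : ℕ} (hm : 0 < m) (hb : b ∈ Icc 1 n)
    (hb' : b' ∈ Icc 1 n) (h : (a * n - b * m : ℤ) ≡ a * n - b' * m [ZMOD m * n]) : b = b' := by
  have hdvd : (n : ℤ) ∣ b - b' := by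
    refine Int.dvd_of_mul_dvd_mul_left (a := (m : ℤ)) (by exact_mod_cast hm.ne') ?_
    rw [show (m : ℤ) * (b - b') = (a * n - b' * m) - (a * n - b * m) by ring]
    exact h.dvd
  rw [mem_Icc] at hb hb'
  have := Int.eq_zero_of_abs_lt_dvd hdvd (by rw [abs_lt]; omega)
  omega

theorem card_le_gcd_of_modEq {m n : ℕ} {T : Finset (ℕ × ℕ)} (hT : T ⊆ Icc 1 m ×ˢ Icc 1 n)
    (c : ℤ) (hc : ∀ p ∈ T, (p.1 * n - p.2 * m : ℤ) ≡ c [ZMOD m * n]) :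
    #T ≤ m.gcd n := by
  obtain rfl | hm := Nat.eq_zero_or_pos m
  · simp [Finset.subset_empty.1 (by simpa using hT)]
  set d := m / m.gcd n
  have hd : 0 < d := Nat.div_pos (Nat.gcd_le_left n hm) (Nat.gcd_pos_of_pos_left n hm)
  have hmem : ∀ p ∈ T, p.1 ∈ Icc 1 m ∧ p.2 ∈ Icc 1 n := fun p hp => mem_product.1 (hT hp)
  -- First coordinates in `T` are congruent mod `d` and determine the second one, so
  -- `(a - 1) / d ∈ range (gcd m n)` determines the whole pair.
  calc #T ≤ #(range (m.gcd n)) := by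
        refine card_le_card_of_injOn (fun p => (p.1 - 1) / d) (fun p hp => ?_)
          fun p hp q hq hpq => ?_
        · have := mem_Icc.1 (hmem p hp).1
          rw [coe_range, Set.mem_Iio, Nat.div_lt_iff_lt_mul hd,
            Nat.mul_div_cancel' (Nat.gcd_dvd_left m n)]
          omega
        · have h := (hc p hp).trans (hc q hq).symm
          have hp1 := (mem_Icc.1 (hmem p hp).1).1
          have hq1 := (mem_Icc.1 (hmem q hq).1).1
          have hfst : p.1 - 1 = q.1 - 1 :=
            Nat.ext_div_modEq hpq <| Nat.ModEq.add_right_cancel' 1 <| by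
              rw [Nat.sub_add_cancel hp1, Nat.sub_add_cancel hq1]
              exact modEq_div_gcd_of_modEq hm h
          have hfst' : p.1 = q.1 := by omega
          rw [hfst'] at h
          exact Prod.ext hfst' (eq_of_modEq_of_mem_Icc hm (hmem p hp).2 (hmem q hq).2 h)
    _ = m.gcd n := card_range _

theorem mul_card_le_of_forall_dvd_abs_lt {g : ℕ} (hg : 0 < g) {s : Finset ℤ} {R : ℝ}
    (hR : 0 ≤ R) (hs : ∀ c ∈ s, c ≠ 0 ∧ (g : ℤ) ∣ c ∧ |(c : ℝ)| < R) :
    (g * #s : ℝ) ≤ 2 * R := by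
  have hg' : (0 : ℝ) < g := by exact_mod_cast hg
  set K := ⌊R / g⌋
  have hK0 : 0 ≤ K := Int.floor_nonneg.2 (by positivity)
  have hmaps : ∀ c ∈ s, c / g ∈ (Icc (-K) K).erase 0 := by
    intro c hc
    obtain ⟨hc0, ⟨j, rfl⟩, hlt⟩ := hs c hc
    have hj : |(j : ℝ)| < R / g := by
      rw [lt_div_iff₀ hg', mul_comm]
      simpa [abs_mul] using hlt
    rw [Int.mul_ediv_cancel_left _ (by exact_mod_cast hg.ne'), mem_erase, mem_Icc,
      neg_le, Int.le_floor, Int.le_floor]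
    push_cast
    exact ⟨by rintro rfl; simp at hc0, (neg_le_abs _).trans hj.le, (le_abs_self _).trans hj.le⟩
  have hinj : Set.InjOn (· / (g : ℤ)) s := by
    intro c hc c' hc' h
    rw [← Int.mul_ediv_cancel' (hs c hc).2.1, ← Int.mul_ediv_cancel' (hs c' hc').2.1]
    exact congrArg _ h
  have hcard : (#s : ℤ) ≤ 2 * K := by
    have := card_le_card_of_injOn _ hmaps hinj
    rw [card_erase_of_mem (by simp [hK0]), Int.card_Icc] at this
    omega
  have hKR : (K : ℝ) * g ≤ R := (le_div_iff₀ hg').1 (Int.floor_le _)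
  calc (g * #s : ℝ) = g * ((#s : ℤ) : ℝ) := by norm_cast
    _ ≤ g * (2 * K) := by gcongr; exact_mod_cast hcard
    _ ≤ 2 * R := by linarith

theorem div_gcd_le_gcd_of_mul_eq {m n a b : ℕ} (hm : 0 < m) (ha : 0 < a) (h : a * n = b * m) :
    m / m.gcd n ≤ a.gcd m := by
  have hmod : a * n ≡ 0 * n [MOD m] := by
    rw [h, zero_mul]; exact (Nat.modEq_zero_iff_dvd.2 (dvd_mul_left m b))
  exact Nat.le_of_dvd (Nat.gcd_pos_of_pos_left m ha) <| Nat.dvd_gcd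
    (Nat.modEq_zero_iff_dvd.1 (Nat.ModEq.cancel_right_div_gcd hm hmod))
    (Nat.div_dvd_of_dvd (Nat.gcd_dvd_left m n))

noncomputable def scaledGap (m n a b : ℕ) : ℤ :=
  a * n - b * m - round ((a / m : ℝ) - b / n) * (m * n)

theorem abs_scaledGap {m n : ℕ} (hm : 0 < m) (hn : 0 < n) (a b : ℕ) :
    |(scaledGap m n a b : ℝ)| =
      m * n * dist ((a / m : ℝ) : UnitAddCircle) ((b / n : ℝ) : UnitAddCircle) := by
  have hm' : (0 : ℝ) < m := by exact_mod_cast hm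
  have hn' : (0 : ℝ) < n := by exact_mod_cast hn
  rw [UnitAddCircle.dist_coe_coe, ← abs_of_pos (mul_pos hm' hn'), ← abs_mul, scaledGap]
  push_cast
  congr 1
  generalize ((round ((a / m : ℝ) - b / n) : ℤ) : ℝ) = k
  field_simp

theorem modEq_scaledGap (m n a b : ℕ) : (a * n - b * m : ℤ) ≡ scaledGap m n a b [ZMOD m * n] :=
  Int.modEq_iff_dvd.2 ⟨-round ((a / m : ℝ) - b / n), by rw [scaledGap]; ring⟩

theorem gcd_dvd_scaledGap (m n a b : ℕ) : (m.gcd n : ℤ) ∣ scaledGap m n a b := by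
  have hgm : (m.gcd n : ℤ) ∣ m := Int.natCast_dvd_natCast.2 (Nat.gcd_dvd_left m n)
  have hgn : (m.gcd n : ℤ) ∣ n := Int.natCast_dvd_natCast.2 (Nat.gcd_dvd_right m n)
  exact dvd_sub (dvd_sub (hgn.mul_left _) (hgm.mul_left _)) ((hgm.mul_right _).mul_left _)

theorem scaledGap_ne_zero {m n a b : ℕ} (ha : a ∈ Icc 1 m) (hb : b ∈ Icc 1 n)
    (hne : a * n ≠ b * m) :
    scaledGap m n a b ≠ 0 := by
  intro h0
  have hdvd := (modEq_scaledGap m n a b).dvd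
  rw [h0, zero_sub, dvd_neg] at hdvd
  rw [mem_Icc] at ha hb
  have hA1 : (1 : ℤ) ≤ a := by exact_mod_cast ha.1
  have hAm : (a : ℤ) ≤ m := by exact_mod_cast ha.2
  have hB1 : (1 : ℤ) ≤ b := by exact_mod_cast hb.1
  have hBn : (b : ℤ) ≤ n := by exact_mod_cast hb.2
  have hlt : |(a * n - b * m : ℤ)| < m * n := by
    rw [abs_lt]; constructor <;> nlinarith
  exact hne (by exact_mod_cast sub_eq_zero.1 (Int.eq_zero_of_abs_lt_dvd hdvd hlt))

theorem card_filter_ne_le_of_dist_lt {m n : ℕ} {S : Finset (ℕ × ℕ)}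
    (hS : S ⊆ Icc 1 m ×ˢ Icc 1 n) {δ : ℝ} (hδ : 0 ≤ δ)
    (hdist : ∀ p ∈ S, dist ((p.1 / m : ℝ) : UnitAddCircle) ((p.2 / n : ℝ) : UnitAddCircle) < δ) :
    (#{p ∈ S | p.1 * n ≠ p.2 * m} : ℝ) ≤ 2 * (m * n * δ) := by
  obtain rfl | hm := Nat.eq_zero_or_pos m
  · simp [Finset.subset_empty.1 (by simpa using hS)]
  set S' := {p ∈ S | p.1 * n ≠ p.2 * m}
  set f : ℕ × ℕ → ℤ := fun p => scaledGap m n p.1 p.2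
  have hf : ∀ c ∈ S'.image f, c ≠ 0 ∧ (m.gcd n : ℤ) ∣ c ∧ |(c : ℝ)| < m * n * δ := by
    intro c hc
    obtain ⟨p, hp, rfl⟩ := mem_image.1 hc
    obtain ⟨hpS, hne⟩ := mem_filter.1 hp
    obtain ⟨ha, hb⟩ := mem_product.1 (hS hpS)
    have hn : 0 < n := by have := mem_Icc.1 hb; omega
    refine ⟨scaledGap_ne_zero ha hb hne, gcd_dvd_scaledGap m n _ _, ?_⟩
    rw [abs_scaledGap hm hn]
    exact mul_lt_mul_of_pos_left (hdist p hpS) (by positivity)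
  have hfib : ∀ c ∈ S'.image f, #{p ∈ S' | f p = c} ≤ m.gcd n := fun c _ =>
    card_le_gcd_of_modEq ((filter_subset _ _).trans ((filter_subset _ _).trans hS)) c fun p hp =>
      (mem_filter.1 hp).2 ▸ modEq_scaledGap m n p.1 p.2
  calc (#S' : ℝ) ≤ (m.gcd n * #(S'.image f) : ℕ) := by
        exact_mod_cast card_le_mul_card_image S' _ hfib
    _ ≤ 2 * (m * n * δ) := by
        push_cast
        exact mul_card_le_of_forall_dvd_abs_lt (Nat.gcd_pos_of_pos_left n hm) (by positivity) hf

noncomputable def centres (n : ℕ) (D : ℝ) : Finset ℕ := {a ∈ Icc 1 n | (a.gcd n : ℝ) ≤ D}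

theorem centres_subset {n : ℕ} {D : ℝ} : centres n D ⊆ Icc 1 n := filter_subset _ _

theorem E_subset_iUnion_ball (ψ : ℕ → ℝ) (n : ℕ) (D : ℝ) :
    E ψ n D ⊆ ⋃ a ∈ centres n D, ball ((a / n : ℝ) : UnitAddCircle) (ψ n / n) := by
  refine Set.iUnion₂_mono' fun a ha => ⟨a, by simpa [centres, and_assoc] using ha, ?_⟩
  rw [sub_div, add_div, ← Real.ball_eq_Ioo]
  exact UnitAddCircle.coe_image_ball_subset _ _

theorem card_filter_eq_le {m n : ℕ} (hm : 0 < m) {Dm Dn : ℝ} {S : Finset (ℕ × ℕ)}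
    (hS : S ⊆ centres m Dm ×ˢ centres n Dn) :
    (#{p ∈ S | p.1 * n = p.2 * m} : ℝ) ≤
      if ((m / m.gcd n : ℕ) : ℝ) ≤ Dm ∧ ((n / m.gcd n : ℕ) : ℝ) ≤ Dn then (m.gcd n : ℝ) else 0 := by
  have hsub : {p ∈ S | p.1 * n = p.2 * m} ⊆ Icc 1 m ×ˢ Icc 1 n :=
    (filter_subset _ _).trans (hS.trans (product_subset_product centres_subset centres_subset))
  obtain hempty | ⟨p, hp⟩ := {p ∈ S | p.1 * n = p.2 * m}.eq_empty_or_nonempty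
  · rw [hempty, card_empty, Nat.cast_zero]
    split_ifs <;> positivity
  obtain ⟨hpS, hpeq⟩ := mem_filter.1 hp
  have hpc := hS hpS
  simp only [centres, mem_product, mem_filter, mem_Icc] at hpc
  obtain ⟨⟨⟨ha1, -⟩, hga⟩, ⟨hb1, hbn⟩, hgb⟩ := hpc
  have hn : 0 < n := by omega
  have hcond : ((m / m.gcd n : ℕ) : ℝ) ≤ Dm ∧ ((n / m.gcd n : ℕ) : ℝ) ≤ Dn :=
    ⟨le_trans (by exact_mod_cast div_gcd_le_gcd_of_mul_eq hm ha1 hpeq) hga,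
      le_trans (by rw [Nat.gcd_comm]; exact_mod_cast div_gcd_le_gcd_of_mul_eq hn hb1 hpeq.symm) hgb⟩
  rw [if_pos hcond]
  exact_mod_cast card_le_gcd_of_modEq hsub 0 fun q hq => by
    have h : (q.1 * n : ℤ) = q.2 * m := by exact_mod_cast (mem_filter.1 hq).2
    rw [h, sub_self]

theorem card_close_centres_le {m n : ℕ} (hm : 0 < m) {Dm Dn δ : ℝ} (hδ : 0 ≤ δ)
    {S : Finset (ℕ × ℕ)} (hS : S ⊆ centres m Dm ×ˢ centres n Dn)
    (hdist : ∀ p ∈ S, dist ((p.1 / m : ℝ) : UnitAddCircle) ((p.2 / n : ℝ) : UnitAddCircle) < δ) :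
    (#S : ℝ) ≤ 2 * (m * n * δ) +
      if ((m / m.gcd n : ℕ) : ℝ) ≤ Dm ∧ ((n / m.gcd n : ℕ) : ℝ) ≤ Dn then (m.gcd n : ℝ) else 0 := by
  have hne := card_filter_ne_le_of_dist_lt
    (hS.trans (product_subset_product centres_subset centres_subset)) hδ hdist
  have heq := card_filter_eq_le hm hS
  rw [← card_filter_add_card_filter_not (s := S) (fun p => p.1 * n = p.2 * m), Nat.cast_add]
  simp only [ne_eq] at hne
  linarith

theorem volume_E_inter_E_le {ψ : ℕ → ℝ} (hψ : ∀ k, 0 ≤ ψ k) {m n : ℕ} (hm : 0 < m) (hn : 0 < n)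
    (Dm Dn : ℝ) :
    volume (E ψ m Dm ∩ E ψ n Dn) ≤ ENNReal.ofReal (8 * (ψ m * ψ n) +
      if ((m / m.gcd n : ℕ) : ℝ) ≤ Dm ∧ ((n / m.gcd n : ℕ) : ℝ) ≤ Dn then
        m.gcd n * min (2 * (ψ m / m)) (2 * (ψ n / n)) else 0) := by
  set π : ℝ → UnitAddCircle := fun x => x
  set δ := ψ m / m + ψ n / n
  set L := min (2 * (ψ m / m)) (2 * (ψ n / n))
  set P := centres m Dm ×ˢ centres n Dn
  set S := {p ∈ P | dist (π (p.1 / m)) (π (p.2 / n)) < δ}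
  have := hψ m
  have := hψ n
  have hcover : E ψ m Dm ∩ E ψ n Dn ⊆
      ⋃ p ∈ P, ball (π (p.1 / m)) (ψ m / m) ∩ ball (π (p.2 / n)) (ψ n / n) := by
    intro x ⟨hxm, hxn⟩
    obtain ⟨a, ha, hxa⟩ := Set.mem_iUnion₂.1 (E_subset_iUnion_ball ψ m Dm hxm)
    obtain ⟨b, hb, hxb⟩ := Set.mem_iUnion₂.1 (E_subset_iUnion_ball ψ n Dn hxn)
    exact Set.mem_iUnion₂.2 ⟨(a, b), mem_product.2 ⟨ha, hb⟩, hxa, hxb⟩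
  have hδL : m * n * δ * L ≤ 4 * (ψ m * ψ n) :=
    calc m * n * δ * L = ψ m * n * L + ψ n * m * L := by simp only [δ]; field_simp
      _ ≤ ψ m * n * (2 * (ψ n / n)) + ψ n * m * (2 * (ψ m / m)) := by
        gcongr
        exacts [min_le_right _ _, min_le_left _ _]
      _ = 4 * (ψ m * ψ n) := by field_simp; ring
  have hcount := card_close_centres_le (S := S) hm (by positivity) (filter_subset _ _)
    fun p hp => (mem_filter.1 hp).2
  calc volume (E ψ m Dm ∩ E ψ n Dn)
      ≤ ∑ p ∈ P, volume (ball (π (p.1 / m)) (ψ m / m) ∩ ball (π (p.2 / n)) (ψ n / n)) :=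
        (measure_mono hcover).trans (measure_biUnion_finset_le _ _)
    _ = ∑ p ∈ S, volume (ball (π (p.1 / m)) (ψ m / m) ∩ ball (π (p.2 / n)) (ψ n / n)) := by
        refine (sum_filter_of_ne fun p _ hp => ?_).symm
        by_contra hfar
        exact hp (by rw [(ball_disjoint_ball (not_lt.1 hfar)).inter_eq, measure_empty])
    _ ≤ ∑ p ∈ S, ENNReal.ofReal L :=
        sum_le_sum fun p _ => AddCircle.volume_ball_inter_ball_le _ _ _ _
    _ = ENNReal.ofReal (#S * L) := by
        rw [sum_const, nsmul_eq_mul, ENNReal.ofReal_mul (Nat.cast_nonneg _), ENNReal.ofReal_natCast]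
    _ ≤ _ := by
        refine ENNReal.ofReal_le_ofReal ?_
        have hL : 0 ≤ L := by positivity
        split_ifs at hcount ⊢ <;> nlinarith

theorem min_le_add_of_mul_le_four_mul {A B x y : ℝ} (hA : 0 ≤ A) (hB : 0 ≤ B) (hx : 0 ≤ x)
    (hy : 0 ≤ y) (h : A * B ≤ 4 * (x * y)) : min A B ≤ x + y := by
  nlinarith [min_le_left A B, min_le_right A B, le_min hA hB, sq_nonneg (x - y),
    mul_le_mul (min_le_left A B) (min_le_right A B) (le_min hA hB) hA]

theorem min_two_mul_div_le {a b Da Db μ ν : ℝ} (ha : 0 ≤ a) (hb : 0 ≤ b) (hμ : 0 < μ) (hν : 0 < ν)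
    (hμD : μ ≤ Da) (hνD : ν ≤ Db) :
    min (2 * a / μ) (2 * b / ν) ≤ a * Da / ν ^ 2 + b * Db / μ ^ 2 := by
  have hDa : 0 ≤ Da := hμ.le.trans hμD
  have hDb : 0 ≤ Db := hν.le.trans hνD
  refine min_le_add_of_mul_le_four_mul (by positivity) (by positivity) (by positivity)
    (by positivity) ?_
  have hAB : 2 * a / μ * (2 * b / ν) = 4 * (a * b) / (μ * ν) := by field_simp; ring
  have hxy : 4 * (a * Da / ν ^ 2 * (b * Db / μ ^ 2)) =
      4 * (a * b) / (μ * ν) * (Da * Db / (μ * ν)) := by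
    field_simp
  rw [hAB, hxy]
  exact le_mul_of_one_le_right (by positivity)
    ((one_le_div (by positivity)).2 (mul_le_mul hμD hνD hν.le hDa))

/-- `m`'s share of the cost of coinciding centres. Nothing is charged to `m = 1`: the final bound
has no `ψ 1` term. -/
noncomputable def overlapWeight (ψ : ℕ → ℝ) (D : ℕ → ℝ) (m n : ℕ) : ℝ :=
  if 2 ≤ m ∧ ((m / m.gcd n : ℕ) : ℝ) ≤ D m then ψ m * D m / ((n / m.gcd n : ℕ) : ℝ) ^ 2 else 0

theorem overlapWeight_nonneg {ψ : ℕ → ℝ} (hψ : ∀ k, 0 ≤ ψ k) (D : ℕ → ℝ) (m n : ℕ) :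
    0 ≤ overlapWeight ψ D m n := by
  unfold overlapWeight
  split_ifs with h
  · have : 0 ≤ D m := le_trans (Nat.cast_nonneg _) h.2
    have := hψ m
    positivity
  · exact le_rfl

theorem gcd_mul_min_le_overlapWeight_add {ψ : ℕ → ℝ} (hψ : ∀ k, 0 ≤ ψ k) (D : ℕ → ℝ) {m n : ℕ}
    (hm : 0 < m) (hn : 0 < n) (hmn : m ≠ n)
    (hcond : ((m / m.gcd n : ℕ) : ℝ) ≤ D m ∧ ((n / m.gcd n : ℕ) : ℝ) ≤ D n) :
    m.gcd n * min (2 * (ψ m / m)) (2 * (ψ n / n)) ≤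
      overlapWeight ψ D m n + overlapWeight ψ D n m := by
  wlog hm2 : 2 ≤ m generalizing m n with H
  · have := H hn hm hmn.symm (by rwa [Nat.gcd_comm, and_comm]) (by omega)
    rwa [Nat.gcd_comm, min_comm, add_comm]
  set g := m.gcd n
  have hg : 0 < g := Nat.gcd_pos_of_pos_left n hm
  set μ := m / g
  set ν := n / g
  have hmμ : (m : ℝ) = g * μ := by exact_mod_cast (Nat.mul_div_cancel' (Nat.gcd_dvd_left m n)).symm
  have hnν : (n : ℝ) = g * ν := by exact_mod_cast (Nat.mul_div_cancel' (Nat.gcd_dvd_right m n)).symm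
  have hμ : (0 : ℝ) < μ := by exact_mod_cast Nat.div_pos (Nat.gcd_le_left n hm) hg
  have hν : (0 : ℝ) < ν := by exact_mod_cast Nat.div_pos (Nat.gcd_le_right (m := m) hn) hg
  have hg' : (0 : ℝ) < g := by exact_mod_cast hg
  have hψm := hψ m
  have hψn := hψ n
  have hreduce :
      (g : ℝ) * min (2 * (ψ m / m)) (2 * (ψ n / n)) = min (2 * ψ m / μ) (2 * ψ n / ν) := by
    rw [mul_min_of_nonneg _ _ hg'.le, hmμ, hnν]
    congr 1 <;> field_simp
  have hwm : overlapWeight ψ D m n = ψ m * D m / ν ^ 2 := if_pos ⟨hm2, hcond.1⟩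
  rw [hreduce, hwm]
  obtain rfl | hn2 : n = 1 ∨ 2 ≤ n := by omega
  · -- `overlapWeight ψ D 1 m = 0`, so `m` pays alone, which `m ≤ D m` allows.
    have hμm : (μ : ℝ) = m := by simp [μ, g]
    have hν1 : (ν : ℝ) = 1 := by simp [ν, g]
    have hDm : 2 ≤ D m := le_trans (by exact_mod_cast hm2) (hμm ▸ hcond.1)
    have hm' : (2 : ℝ) ≤ m := by exact_mod_cast hm2
    calc min (2 * ψ m / μ) (2 * ψ 1 / ν) ≤ 2 * ψ m / m := hμm ▸ min_le_left _ _
      _ ≤ ψ m * D m / ν ^ 2 := by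
        have : 2 ≤ D m * m := by nlinarith
        rw [hν1, one_pow, div_one, div_le_iff₀ (by positivity)]
        nlinarith [mul_le_mul_of_nonneg_left this hψm]
      _ ≤ _ := le_add_of_nonneg_right (overlapWeight_nonneg hψ D 1 m)
  · have hwn : overlapWeight ψ D n m = ψ n * D n / μ ^ 2 := by
      rw [overlapWeight, Nat.gcd_comm, if_pos ⟨hn2, hcond.2⟩]
    rw [hwn]
    exact min_two_mul_div_le hψm hψn hμ hν hcond.1 hcond.2

theorem volume_E_inter_E_le_overlapWeight {ψ : ℕ → ℝ} (hψ : ∀ k, 0 ≤ ψ k) (D : ℕ → ℝ) {m n : ℕ}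
    (hm : 0 < m) (hn : 0 < n) (hmn : m ≠ n) :
    volume (E ψ m (D m) ∩ E ψ n (D n)) ≤
      ENNReal.ofReal (8 * (ψ m * ψ n) + overlapWeight ψ D m n + overlapWeight ψ D n m) := by
  refine (volume_E_inter_E_le hψ hm hn _ _).trans (ENNReal.ofReal_le_ofReal ?_)
  rw [add_assoc]
  gcongr
  split_ifs with hcond
  · exact gcd_mul_min_le_overlapWeight_add hψ D hm hn hmn hcond
  · exact add_nonneg (overlapWeight_nonneg hψ D m n) (overlapWeight_nonneg hψ D n m)

theorem card_divisors_filter_div_le (m : ℕ) {D : ℝ} (hD : 0 ≤ D) :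
    (#{d ∈ m.divisors | ((m / d : ℕ) : ℝ) ≤ D} : ℝ) ≤ D := by
  have hswap : #{d ∈ m.divisors | ((m / d : ℕ) : ℝ) ≤ D} =
      #(m.divisors.filter fun d : ℕ => (d : ℝ) ≤ D) := by
    simpa only [card_filter] using Nat.sum_div_divisors m fun d => if (d : ℝ) ≤ D then 1 else 0
  have hsub : m.divisors.filter (fun d : ℕ => (d : ℝ) ≤ D) ⊆ Icc 1 ⌊D⌋₊ := fun d hd => by
    rw [mem_filter, Nat.mem_divisors] at hd
    exact mem_Icc.2 ⟨Nat.pos_of_dvd_of_pos hd.1.1 (Nat.pos_of_ne_zero hd.1.2), Nat.le_floor hd.2⟩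
  calc (#{d ∈ m.divisors | ((m / d : ℕ) : ℝ) ≤ D} : ℝ) ≤ #(Icc 1 ⌊D⌋₊) := by
        rw [hswap]; exact_mod_cast card_le_card hsub
    _ ≤ D := by simpa using Nat.floor_le hD

theorem sum_Icc_inv_sq_le_two (N : ℕ) : ∑ ν ∈ Icc 1 N, ((ν : ℝ) ^ 2)⁻¹ ≤ 2 := by
  have hI : Icc 1 N = Ioo 0 (N + 1) := by ext; simp; omega
  simpa [hI] using sum_Ioo_inv_sq_le (α := ℝ) 0 (N + 1)

theorem sum_inv_sq_div_gcd_le {m : ℕ} (hm : 0 < m) (N : ℕ) {D : ℝ} (hD : 0 ≤ D) :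
    ∑ n ∈ Icc 1 N with ((m / m.gcd n : ℕ) : ℝ) ≤ D, (((n / m.gcd n : ℕ) : ℝ) ^ 2)⁻¹ ≤ 2 * D := by
  set F := {n ∈ Icc 1 N | ((m / m.gcd n : ℕ) : ℝ) ≤ D}
  set G := {d ∈ m.divisors | ((m / d : ℕ) : ℝ) ≤ D}
  set split : ℕ → ℕ × ℕ := fun n => (m.gcd n, n / m.gcd n)
  have hinj : Set.InjOn split F := fun a _ b _ hab => by
    rw [← Nat.mul_div_cancel' (Nat.gcd_dvd_right m a),
      ← Nat.mul_div_cancel' (Nat.gcd_dvd_right m b)]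
    exact congrArg (fun q : ℕ × ℕ => q.1 * q.2) hab
  have hmaps : ∀ n ∈ F, split n ∈ G ×ˢ Icc 1 N := by
    intro n hn
    obtain ⟨hn, hnD⟩ := mem_filter.1 hn
    rw [mem_Icc] at hn
    refine mem_product.2 ⟨mem_filter.2 ⟨Nat.mem_divisors.2 ⟨Nat.gcd_dvd_left m n, hm.ne'⟩, hnD⟩,
      mem_Icc.2 ⟨Nat.div_pos (Nat.gcd_le_right (m := m) (by omega)) (Nat.gcd_pos_of_pos_left n hm),
        (Nat.div_le_self _ _).trans hn.2⟩⟩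
  calc ∑ n ∈ F, (((n / m.gcd n : ℕ) : ℝ) ^ 2)⁻¹ = ∑ q ∈ F.image split, ((q.2 : ℝ) ^ 2)⁻¹ :=
        (sum_image (f := fun q : ℕ × ℕ => ((q.2 : ℝ) ^ 2)⁻¹) hinj).symm
    _ ≤ ∑ q ∈ G ×ˢ Icc 1 N, ((q.2 : ℝ) ^ 2)⁻¹ :=
        sum_le_sum_of_subset_of_nonneg (image_subset_iff.2 hmaps) fun _ _ _ => by positivity
    _ = #G * ∑ ν ∈ Icc 1 N, ((ν : ℝ) ^ 2)⁻¹ := by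
        rw [sum_product, ← nsmul_eq_mul, ← sum_const]
    _ ≤ D * 2 := mul_le_mul (card_divisors_filter_div_le m hD) (sum_Icc_inv_sq_le_two N)
        (by positivity) hD
    _ = 2 * D := mul_comm _ _

theorem sum_overlapWeight_le {ψ : ℕ → ℝ} (hψ : ∀ k, 0 ≤ ψ k) {D : ℕ → ℝ} (hD : ∀ k, 0 ≤ D k)
    (m N : ℕ) : ∑ n ∈ Icc 1 N, overlapWeight ψ D m n ≤ 2 * ψ m * D m ^ 2 := by
  by_cases hm2 : 2 ≤ m
  · have hsum := sum_inv_sq_div_gcd_le (by omega : 0 < m) N (hD m)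
    calc ∑ n ∈ Icc 1 N, overlapWeight ψ D m n
        = ψ m * D m * ∑ n ∈ Icc 1 N with ((m / m.gcd n : ℕ) : ℝ) ≤ D m,
            (((n / m.gcd n : ℕ) : ℝ) ^ 2)⁻¹ := by
          simp only [overlapWeight, hm2, true_and, mul_sum, sum_filter, div_eq_mul_inv, mul_ite,
            mul_zero]
      _ ≤ ψ m * D m * (2 * D m) := mul_le_mul_of_nonneg_left hsum (mul_nonneg (hψ m) (hD m))
      _ = 2 * ψ m * D m ^ 2 := by ring
  · have := hψ m
    simp [overlapWeight, hm2]
    positivity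

theorem sum_offDiag_overlap_le {ψ : ℕ → ℝ} (hψ : ∀ k, 0 ≤ ψ k) {D : ℕ → ℝ} (hD : ∀ k, 0 ≤ D k)
    (N : ℕ) :
    ∑ q ∈ (Icc 1 N ×ˢ Icc 1 N).filter (fun q : ℕ × ℕ => q.1 ≠ q.2),
        (8 * (ψ q.1 * ψ q.2) + overlapWeight ψ D q.1 q.2 + overlapWeight ψ D q.2 q.1) ≤
      8 * (∑ n ∈ Icc 1 N, ψ n) ^ 2 + 4 * ∑ n ∈ Icc 2 N, ψ n * D n ^ 2 := by
  have hw := overlapWeight_nonneg hψ D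
  have hrow : ∑ m ∈ Icc 1 N, ∑ n ∈ Icc 1 N, overlapWeight ψ D m n ≤
      2 * ∑ m ∈ Icc 2 N, ψ m * D m ^ 2 := by
    rw [← sum_subset (Icc_subset_Icc_left one_le_two) fun m hm hm' => ?_, mul_sum]
    · exact sum_le_sum fun m _ => (sum_overlapWeight_le hψ hD m N).trans_eq (by ring)
    · obtain rfl : m = 1 := by simp only [mem_Icc] at hm hm'; omega
      simp [overlapWeight]
  calc _ ≤ ∑ q ∈ Icc 1 N ×ˢ Icc 1 N,
        (8 * (ψ q.1 * ψ q.2) + overlapWeight ψ D q.1 q.2 + overlapWeight ψ D q.2 q.1) :=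
        sum_le_sum_of_subset_of_nonneg (filter_subset _ _) fun q _ _ => by
          have := hψ q.1; have := hψ q.2; have := hw q.1 q.2; have := hw q.2 q.1; positivity
    _ = 8 * (∑ n ∈ Icc 1 N, ψ n) ^ 2 + 2 * ∑ m ∈ Icc 1 N, ∑ n ∈ Icc 1 N, overlapWeight ψ D m n := by
        rw [sum_add_distrib, sum_add_distrib, sum_product, sum_product, sum_product (f := fun q =>
          overlapWeight ψ D q.2 q.1), sum_comm (f := fun m n => overlapWeight ψ D n m), sq,
          sum_mul_sum, mul_sum, mul_sum]
        simp only [mul_sum, ← sum_add_distrib]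
        exact sum_congr rfl fun _ _ => sum_congr rfl fun _ _ => by ring
    _ ≤ _ := by linarith

theorem sum_volume_E_inter_E_le {ψ : ℕ → ℝ} (hψ : ∀ k, 0 ≤ ψ k) {D : ℕ → ℝ}
    (hD : ∀ k, 0 ≤ D k) (N : ℕ) :
    ∑ q ∈ (Icc 1 N ×ˢ Icc 1 N).filter (fun q : ℕ × ℕ => q.1 ≠ q.2),
        volume (E ψ q.1 (D q.1) ∩ E ψ q.2 (D q.2)) ≤
      ENNReal.ofReal (8 * (∑ n ∈ Icc 1 N, ψ n) ^ 2 + 4 * ∑ n ∈ Icc 2 N, ψ n * D n ^ 2) := by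
  have hw := overlapWeight_nonneg hψ D
  refine (sum_le_sum fun q hq => ?_).trans <|
    (ENNReal.ofReal_sum_of_nonneg fun q _ => ?_).symm.trans_le <|
      ENNReal.ofReal_le_ofReal (sum_offDiag_overlap_le hψ hD N)
  · simp only [mem_filter, mem_product, mem_Icc] at hq
    exact volume_E_inter_E_le_overlapWeight hψ D (by omega) (by omega) hq.2
  · have := hψ q.1; have := hψ q.2; have := hw q.1 q.2; have := hw q.2 q.1
    positivity

noncomputable def threshold (ε : ℝ) (n : ℕ) : ℝ := if n ≤ 1 then 1 else Real.log n ^ (ε / 4)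

theorem Estar_eq_E (ψ : ℕ → ℝ) (ε : ℝ) (n : ℕ) : Estar ψ ε n = E ψ n (threshold ε n) := by
  unfold Estar threshold
  split_ifs <;> rfl

theorem threshold_nonneg (ε : ℝ) (n : ℕ) : 0 ≤ threshold ε n := by
  unfold threshold
  split_ifs
  exacts [zero_le_one, Real.rpow_nonneg (Real.log_natCast_nonneg n) _]

theorem threshold_sq (ε : ℝ) {n : ℕ} (hn : 2 ≤ n) : threshold ε n ^ 2 = Real.log n ^ (ε / 2) := by
  rw [threshold, if_neg (by omega), ← Real.rpow_natCast,
    ← Real.rpow_mul (Real.log_natCast_nonneg n)]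
  congr 1
  push_cast
  ring

theorem stmt13_general (ε : ℝ)
    (ψ : ℕ → ℝ) (hψ : ∀ n, 0 ≤ ψ n ∧ ψ n ≤ 1 / 2)
    (N : ℕ) :
    ∑ q ∈ (Finset.Icc 1 N ×ˢ Finset.Icc 1 N).filter (fun q : ℕ × ℕ => q.1 ≠ q.2),
        volume (Estar ψ ε q.1 ∩ Estar ψ ε q.2) ≤
      ENNReal.ofReal (8 * (∑ n ∈ Finset.Icc 1 N, ψ n) ^ 2 +
        4 * ∑ n ∈ Finset.Icc 2 N, ψ n * (Real.log n) ^ (ε / 2)) := by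
  have hψ0 : ∀ k, 0 ≤ ψ k := fun k => (hψ k).1
  simp only [Estar_eq_E]
  refine (sum_volume_E_inter_E_le hψ0 (threshold_nonneg ε) N).trans_eq ?_
  congr 3
  exact sum_congr rfl fun n hn => by rw [threshold_sq ε (mem_Icc.1 hn).1]

theorem stmt13 (ε : ℝ) (hε : 0 < ε)
    (ψ : ℕ → ℝ) (hψ : ∀ n, 0 ≤ ψ n ∧ ψ n ≤ 1 / 2)
    (N : ℕ) (hN : 2 ≤ N) :
    ∑ q ∈ (Finset.Icc 1 N ×ˢ Finset.Icc 1 N).filter (fun q : ℕ × ℕ => q.1 ≠ q.2),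
        volume (Estar ψ ε q.1 ∩ Estar ψ ε q.2) ≤
      ENNReal.ofReal (8 * (∑ n ∈ Finset.Icc 1 N, ψ n) ^ 2 +
        4 * ∑ n ∈ Finset.Icc 2 N, ψ n * (Real.log n) ^ (ε / 2)) :=
  stmt13_general ε ψ hψ N
end

section
/- Let ε > 0 and let ψ : ℕ → ℝ be a function with 0 ≤ ψ(n) ≤ 1/2 for all n such that ∑_{n=2}^∞ ψ(n)/(log n)^ε diverges. Then there are infinitely many positive integers N such that ∑_{n=1}^N ψ(n) ≥ (log N)^{ε/2}. -/
open Finset Filter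

/-!
Write `S N = ∑_{n ≤ N} ψ n`. If `S N < (log N) ^ (ε / 2)` for all large `N`, then
`S (n - 1) * S n < (log n) ^ ε`, so eventually
`ψ n / (log n) ^ ε ≤ ψ n / (S (n - 1) * S n) = 1 / S (n - 1) - 1 / S n`.
The right-hand side telescopes, so `∑ ψ n / (log n) ^ ε` would converge.
-/

theorem monotone_sum_range_of_nonneg {M : Type*} [AddCommMonoid M] [PartialOrder M]
    [IsOrderedAddMonoid M] {f : ℕ → M} (hf : ∀ n, 0 ≤ f n) :
    Monotone fun n ↦ ∑ i ∈ range n, f i :=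
  fun _ _ h ↦ sum_le_sum_of_subset_of_nonneg (range_subset_range.2 h) fun i _ _ ↦ hf i

theorem inv_sub_inv_sum_range_succ {f : ℕ → ℝ} {n : ℕ} (hn : 0 < ∑ i ∈ range n, f i)
    (hf : 0 ≤ f n) :
    (∑ i ∈ range n, f i)⁻¹ - (∑ i ∈ range (n + 1), f i)⁻¹ =
      f n / ((∑ i ∈ range n, f i) * ∑ i ∈ range (n + 1), f i) := by
  rw [sum_range_succ]
  have : 0 < ∑ i ∈ range n, f i + f n := by positivity
  field_simp
  ring

theorem summable_div_mul_sum_range {f : ℕ → ℝ} (hf : ∀ n, 0 ≤ f n) {m : ℕ}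
    (hm : 0 < ∑ i ∈ range m, f i) :
    Summable fun n ↦ f n / ((∑ i ∈ range n, f i) * ∑ i ∈ range (n + 1), f i) := by
  set s : ℕ → ℝ := fun n ↦ ∑ i ∈ range n, f i
  have hs_pos (k : ℕ) : 0 < s (k + m) :=
    hm.trans_le <| monotone_sum_range_of_nonneg hf (by omega)
  rw [← summable_nat_add_iff m]
  refine summable_of_sum_range_le (c := (s m)⁻¹) (fun k ↦ ?_) fun K ↦ ?_
  · exact div_nonneg (hf _) <| mul_nonneg (hs_pos k).le <|
      (hs_pos k).le.trans (monotone_sum_range_of_nonneg hf (k + m).le_succ)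
  · calc ∑ k ∈ range K, f (k + m) / (s (k + m) * s (k + m + 1))
        = ∑ k ∈ range K, ((s (k + m))⁻¹ - (s (k + 1 + m))⁻¹) := by
          refine sum_congr rfl fun k _ ↦ ?_
          rw [Nat.add_right_comm k 1 m]
          exact (inv_sub_inv_sum_range_succ (hs_pos k) (hf _)).symm
      _ = (s m)⁻¹ - (s (K + m))⁻¹ := by
          rw [sum_range_sub' (fun k ↦ (s (k + m))⁻¹), zero_add]
      _ ≤ (s m)⁻¹ := sub_le_self _ (inv_nonneg.2 (hs_pos K).le)

theorem div_rpow_le_div_mul {x a b L ε : ℝ} (hx : 0 ≤ x) (ha : 0 < a) (hab : a ≤ b)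
    (hL : 0 < L) (hb : b < L ^ (ε / 2)) : x / L ^ ε ≤ x / (a * b) := by
  refine div_le_div_of_nonneg_left hx (by nlinarith) ?_
  calc a * b ≤ L ^ (ε / 2) * L ^ (ε / 2) :=
        mul_le_mul (hab.trans hb.le) hb.le (ha.le.trans hab) (by positivity)
    _ = L ^ ε := by rw [← Real.rpow_add hL, add_halves]

theorem stmt14_general (ε : ℝ)
    (ψ : ℕ → ℝ) (hψ : ∀ n, 0 ≤ ψ n ∧ ψ n ≤ 1 / 2)
    (hdiv : ¬ Summable (fun n : ℕ => ψ n / (Real.log n) ^ ε)) :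
    {N : ℕ | 0 < N ∧
      (Real.log N) ^ (ε / 2) ≤ ∑ n ∈ Finset.Icc 1 N, ψ n}.Infinite := by
  have hψ₀ (n : ℕ) : 0 ≤ ψ (n + 1) := (hψ _).1
  have hS (N : ℕ) : ∑ n ∈ Icc 1 N, ψ n = ∑ i ∈ range N, ψ (i + 1) := by
    rw [range_eq_Ico, sum_Ico_add']; rfl
  obtain ⟨k, hk⟩ : ∃ k, ψ (k + 1) ≠ 0 := by
    by_contra! h
    refine hdiv (summable_of_ne_finset_zero (s := {0}) fun n hn ↦ ?_)
    obtain ⟨k, rfl⟩ := Nat.exists_eq_add_one_of_ne_zero (by simpa using hn)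
    simp [h k]
  have hSk : 0 < ∑ i ∈ range (k + 1), ψ (i + 1) := ((hψ₀ k).lt_of_ne' hk).trans_le <|
    single_le_sum (fun i _ ↦ hψ₀ i) (self_mem_range_succ k)
  intro hfin
  have hsmall : ∀ᶠ n : ℕ in atTop,
      ∑ i ∈ range (n + 1), ψ (i + 1) < Real.log (n + 1 : ℕ) ^ (ε / 2) := by
    have := hfin.eventually_cofinite_notMem
    rw [Nat.cofinite_eq_atTop] at this
    filter_upwards [(tendsto_add_atTop_nat 1).eventually this] with n hn
    simpa [hS] using hn
  refine hdiv <| (summable_nat_add_iff 1).1 <|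
    (summable_div_mul_sum_range hψ₀ hSk).of_norm_bounded_eventually_nat ?_
  filter_upwards [hsmall, eventually_ge_atTop (k + 1)] with n hn hkn
  have hlog : 0 < Real.log (n + 1 : ℕ) := Real.log_pos (Nat.one_lt_cast.2 (by omega))
  rw [Real.norm_of_nonneg (div_nonneg (hψ₀ n) (Real.rpow_nonneg hlog.le ε))]
  exact div_rpow_le_div_mul (hψ₀ n) (hSk.trans_le (monotone_sum_range_of_nonneg hψ₀ hkn))
    (monotone_sum_range_of_nonneg hψ₀ n.le_succ) hlog hn

theorem stmt14 (ε : ℝ) (hε : 0 < ε)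
    (ψ : ℕ → ℝ) (hψ : ∀ n, 0 ≤ ψ n ∧ ψ n ≤ 1 / 2)
    (hdiv : ¬ Summable (fun n : ℕ => ψ n / (Real.log n) ^ ε)) :
    {N : ℕ | 0 < N ∧
      (Real.log N) ^ (ε / 2) ≤ ∑ n ∈ Finset.Icc 1 N, ψ n}.Infinite :=
  stmt14_general ε ψ hψ hdiv
end

section
/- Let n be a squarefree positive integer and D ≥ 1 a real number such that every prime p ≤ D divides n. Then the cardinality of S(n,D) = {a ∈ {1,…,n} : gcd(a,n) ≤ D} equals φ(n) · ∑_{l ≤ D} μ(l)²/φ(l), where the sum is over positive integers l ≤ D. -/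
open ArithmeticFunction
open scoped ArithmeticFunction.Moebius

/-- `S n D` is the set of `a ∈ {1, …, n}` with `gcd(a, n) ≤ D`. -/
noncomputable def S (n : ℕ) (D : ℝ) : Finset ℕ :=
  (Finset.Icc 1 n).filter (fun a => (Nat.gcd a n : ℝ) ≤ D)

/-!
Sorting `a ∈ {1, …, n}` by `d = gcd(a, n)` gives `|S(n, D)| = ∑_{d ∣ n, d ≤ D} φ(n / d)`.
For squarefree `n` every divisor `d` is coprime to `n / d`, so `φ(n / d) = φ(n) / φ(d)`;
and since every prime up to `D` divides `n`, the divisors of `n` up to `D` are exactly the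
squarefree `l ≤ D`, i.e. those with `μ(l)² = 1`.
-/

open Finset

namespace Nat

theorem card_filter_gcd_le_eq_sum_totient (n K : ℕ) :
    #{a ∈ Icc 1 n | a.gcd n ≤ K} = ∑ d ∈ n.divisors with d ≤ K, φ (n / d) := by
  have hper : Function.Periodic (fun a => a.gcd n ≤ K) n := fun a => by
    simp only [gcd_add_self_left]
  rw [show Icc 1 n = Ico 1 (1 + n) by ext; simp only [mem_Icc, mem_Ico]; omega,
    filter_Ico_card_eq_of_periodic _ _ _ hper, count_eq_card_filter_range,
    card_eq_sum_card_fiberwise (f := n.gcd) (t := {d ∈ n.divisors | d ≤ K})]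
  · refine sum_congr rfl fun d hd => ?_
    rw [totient_div_of_dvd (dvd_of_mem_divisors (mem_filter.1 hd).1), filter_filter]
    congr 1
    ext k
    simp only [mem_filter, mem_range, gcd_comm k n]
    exact ⟨fun ⟨hk, _, h⟩ => ⟨hk, h⟩, fun ⟨hk, h⟩ => ⟨hk, h ▸ (mem_filter.1 hd).2, h⟩⟩
  · intro k hk
    simp only [coe_filter, Set.mem_ofPred_eq, mem_range, mem_divisors] at hk ⊢
    exact ⟨⟨gcd_dvd_left n k, by omega⟩, gcd_comm k n ▸ hk.2⟩

theorem totient_mul_totient_div_of_squarefree {n d : ℕ} (hn : Squarefree n) (hd : d ∣ n) :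
    φ d * φ (n / d) = φ n := by
  rw [← totient_mul (coprime_of_squarefree_mul (by rwa [Nat.mul_div_cancel' hd])),
    Nat.mul_div_cancel' hd]

theorem _root_.Squarefree.filter_divisors_le_eq {n K : ℕ} (hn : Squarefree n)
    (hK : ∀ p, p.Prime → p ≤ K → p ∣ n) :
    {d ∈ n.divisors | d ≤ K} = {l ∈ Icc 1 K | Squarefree l} := by
  ext l
  simp only [mem_filter, mem_divisors, mem_Icc]
  constructor
  · rintro ⟨⟨hln, hn0⟩, hlK⟩
    exact ⟨⟨pos_of_dvd_of_pos hln (pos_of_ne_zero hn0), hlK⟩, hn.squarefree_of_dvd hln⟩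
  · rintro ⟨⟨hl1, hlK⟩, hl⟩
    refine ⟨⟨?_, hn.ne_zero⟩, hlK⟩
    rw [← prod_primeFactors_of_squarefree hl, prod_primeFactors_dvd_iff hn.ne_zero]
    intro p hp
    have hp' := mem_primeFactors.1 hp
    exact mem_primeFactors.2
      ⟨hp'.1, hK p hp'.1 ((le_of_dvd hl1 hp'.2.1).trans hlK), hn.ne_zero⟩

end Nat

theorem ArithmeticFunction.sum_moebius_sq_mul {R : Type*} [Ring R] (s : Finset ℕ) (f : ℕ → R) :
    ∑ l ∈ s, ((μ l : ℤ) : R) ^ 2 * f l = ∑ l ∈ s with Squarefree l, f l := by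
  rw [sum_filter]
  refine sum_congr rfl fun l _ => ?_
  split_ifs with hl
  · rw [← Int.cast_pow, moebius_sq_eq_one_of_squarefree hl, Int.cast_one, one_mul]
  · rw [moebius_eq_zero_of_not_squarefree hl, Int.cast_zero, zero_pow two_ne_zero, zero_mul]

theorem stmt16_general (n : ℕ) (hsq : Squarefree n)
    (D : ℝ) (hPn : ∀ p : ℕ, p.Prime → (p : ℝ) ≤ D → p ∣ n) :
    ((S n D).card : ℝ) =
      (Nat.totient n : ℝ) *
        ∑ l ∈ Finset.Icc 1 ⌊D⌋₊, ((μ l : ℤ) : ℝ) ^ 2 / (Nat.totient l : ℝ) := by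
  have hS : S n D = {a ∈ Icc 1 n | a.gcd n ≤ ⌊D⌋₊} :=
    filter_congr fun a _ => (Nat.le_floor_iff' (Nat.gcd_ne_zero_right hsq.ne_zero)).symm
  have hprimes : ∀ p, p.Prime → p ≤ ⌊D⌋₊ → p ∣ n := fun p hp hpD =>
    hPn p hp ((Nat.le_floor_iff' hp.ne_zero).1 hpD)
  simp_rw [div_eq_mul_inv]
  rw [hS, Nat.card_filter_gcd_le_eq_sum_totient, sum_moebius_sq_mul,
    ← hsq.filter_divisors_le_eq hprimes, mul_sum, Nat.cast_sum]
  refine sum_congr rfl fun d hd => ?_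
  have hdn := Nat.dvd_of_mem_divisors (mem_filter.1 hd).1
  have hφd : (Nat.totient d : ℝ) ≠ 0 := mod_cast (Nat.totient_pos.2 (Nat.pos_of_dvd_of_pos hdn hsq.ne_zero.bot_lt)).ne'
  rw [← Nat.totient_mul_totient_div_of_squarefree hsq hdn, Nat.cast_mul]
  field_simp

theorem stmt16 (n : ℕ) (hn : 0 < n) (hsq : Squarefree n)
    (D : ℝ) (hD : 1 ≤ D) (hPn : ∀ p : ℕ, p.Prime → (p : ℝ) ≤ D → p ∣ n) :
    ((S n D).card : ℝ) =
      (Nat.totient n : ℝ) *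
        ∑ l ∈ Finset.Icc 1 ⌊D⌋₊, ((μ l : ℤ) : ℝ) ^ 2 / (Nat.totient l : ℝ) :=
  stmt16_general n hsq D hPn
end
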